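/- Let G be a connected simple graph on N vertices with diameter D. Suppose there exists a symmetric, entrywise nonnegative, irreducible matrix M ∈ M(G) such that (I) M𝟙 = k𝟙 for some k ∈ ℝ, and (II) M has exactly D + 1 distinct eigenvalues. Then there exist D real matrices A^(1), …, A^(D), each in M(G), such that A^(D) · A^(D−1) ⋯ A^(1) = (1/N)·𝟙𝟙ᵀ. -/

import Mathlib

open Matrix

/-- A real `N × N` matrix complies with the graph `G` when its off-diagonal
entries vanish outside the edges of `G`. -/
def SimpleGraph.Complies {N : ℕ} (G : SimpleGraph (Fin N))
    (A : Matrix (Fin N) (Fin N) ℝ) : Prop :=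
  ∀ i j : Fin N, i ≠ j → ¬ G.Adj i j → A i j = 0

/-!
Let `λ₁, …, λ_D` be the eigenvalues of `M` other than `k` and take
`A⁽ᵗ⁾ = (M - λₜ I) / (k - λₜ)`, which comply with `G`. Their product is `ℓ(M)`, where `ℓ` is the
Lagrange basis polynomial of `k` on the spectrum. Since `(X - k) ℓ` vanishes on the spectrum of the
symmetric matrix `M`, we get `M ℓ(M) = k ℓ(M)`: every column of `ℓ(M)` is a `k`-eigenvector of
the irreducible matrix `M`, hence constant (Perron–Frobenius). As `ℓ(M)` is symmetric it is a
multiple of the all-ones matrix, and `ℓ(M) 𝟙 = ℓ(k) 𝟙 = 𝟙` makes the multiple `1 / N`.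
-/

open Polynomial

theorem IsSelfAdjoint.aeval_eq_zero_of_eval_eq_zero_on_spectrum {A : Type*} [Ring A] [StarRing A]
    [TopologicalSpace A] [Algebra ℝ A] [ContinuousFunctionalCalculus ℝ A IsSelfAdjoint] {a : A}
    (ha : IsSelfAdjoint a) {p : ℝ[X]} (hp : ∀ x ∈ spectrum ℝ a, p.eval x = 0) : aeval a p = 0 := by
  rw [← cfc_polynomial p a ha, cfc_congr (g := 0) hp, cfc_zero]

theorem Polynomial.prod_reverse_ofFn_aeval {R A : Type*} [CommSemiring R] [Semiring A]
    [Algebra R A] (x : A) {D : ℕ} (q : Fin D → R[X]) :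
    (List.ofFn fun t => aeval x (q t)).reverse.prod = aeval x (∏ t, q t) := by
  change (List.ofFn (aeval x ∘ q)).reverse.prod = _
  rw [← List.map_ofFn, ← List.map_reverse, ← map_list_prod, List.prod_reverse, List.prod_ofFn]

theorem Lagrange.natDegree_basisDivisor_le {F : Type*} [Field F] (x y : F) :
    (Lagrange.basisDivisor x y).natDegree ≤ 1 :=
  (natDegree_C_mul_le _ _).trans (natDegree_X_sub_C_le _)

theorem SimpleGraph.Complies.aeval_of_natDegree_le_one {N : ℕ} {G : SimpleGraph (Fin N)}
    {A : Matrix (Fin N) (Fin N) ℝ} (hA : G.Complies A) {p : ℝ[X]} (hp : p.natDegree ≤ 1) :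
    G.Complies (aeval A p) := fun i j hij hadj => by
  rw [eq_X_add_C_of_natDegree_le_one hp]
  simp [Algebra.algebraMap_eq_smul_one, hA i j hij hadj, one_apply_ne hij]

namespace Matrix

variable {n R : Type*} [Fintype n] [DecidableEq n]

theorem spectrum_eq_setOf_exists_mulVec_eq_smul [Field R] (A : Matrix n n R) :
    spectrum R A = {μ | ∃ v ≠ 0, A *ᵥ v = μ • v} := by
  ext μ
  rw [← spectrum_toLin', ← Module.End.hasEigenvalue_iff_mem_spectrum]
  refine ⟨fun h => ?_, fun ⟨v, hv, hAv⟩ => ?_⟩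
  · obtain ⟨v, hv⟩ := h.exists_hasEigenvector
    exact ⟨v, hv.2, Module.End.mem_eigenspace_iff.1 hv.1⟩
  · exact Module.End.hasEigenvalue_of_hasEigenvector ⟨Module.End.mem_eigenspace_iff.2 hAv, hv⟩

section CommRing

variable [CommRing R] {A : Matrix n n R}

theorem aeval_mulVec_of_mulVec_eq_smul (p : R[X]) {μ : R} {v : n → R} (hv : A *ᵥ v = μ • v) :
    aeval A p *ᵥ v = p.eval μ • v := by
  rw [← toLinAlgEquiv'_apply, ← aeval_algHom_apply]
  exact Module.End.aeval_apply_of_mem_apply_eq_smul hv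

theorem IsSymm.aeval (hA : A.IsSymm) (p : R[X]) : (aeval A p).IsSymm := by
  induction p using Polynomial.induction_on' with
  | add p q hp hq => simpa using hp.add hq
  | monomial m a => rw [aeval_monomial, ← Algebra.smul_def]; exact (hA.pow m).smul a

end CommRing

theorem IsIrreducible.apply_eq_of_mulVec_eq_smul [CommRing R] [LinearOrder R]
    [IsStrictOrderedRing R] {A : Matrix n n R} (hA : A.IsIrreducible) {k : R}
    (hk : A *ᵥ 1 = k • 1) {v : n → R} (hv : A *ᵥ v = k • v) (i j : n) : v i = v j := by
  have : Nonempty n := ⟨i⟩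
  obtain ⟨i₀, hi₀⟩ := Finite.exists_max v
  -- `u` is a nonnegative `k`-eigenvector vanishing at `i₀`; irreducibility spreads the zero.
  set u : n → R := v i₀ • 1 - v with hu
  have hu_nonneg : ∀ l, 0 ≤ u l := fun l => by simpa [hu] using hi₀ l
  have hAu : A *ᵥ u = k • u := by
    rw [hu, mulVec_sub, mulVec_smul, hk, hv, smul_sub, smul_comm]
  have hu_zero : ∀ l, u l = 0 := by
    intro l
    obtain ⟨m, -, hm⟩ := (isIrreducible_iff_exists_pow_pos hA.nonneg).1 hA i₀ l
    have hsum : ∑ l', (A ^ m) i₀ l' * u l' = 0 := by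
      simpa [mulVec, dotProduct, hu] using congrFun (aeval_mulVec_of_mulVec_eq_smul (X ^ m) hAu) i₀
    rw [Finset.sum_eq_zero_iff_of_nonneg fun l' _ =>
      mul_nonneg (pow_apply_nonneg hA.nonneg m i₀ l') (hu_nonneg l')] at hsum
    exact (mul_eq_zero.1 (hsum l (Finset.mem_univ l))).resolve_left hm.ne'
  have hi := hu_zero i
  have hj := hu_zero j
  simp only [hu, Pi.sub_apply, Pi.smul_apply, Pi.one_apply, smul_eq_mul, mul_one] at hi hj
  linarith

theorem IsIrreducible.eq_of_mul_eq_smul [Field R] [LinearOrder R] [IsStrictOrderedRing R]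
    {A P : Matrix n n R} (hA : A.IsIrreducible) {k : R} (hk : A *ᵥ 1 = k • 1)
    (hP : P.IsSymm) (hAP : A * P = k • P) (hP1 : P *ᵥ 1 = 1) :
    P = of fun _ _ => (Fintype.card n : R)⁻¹ := by
  have hcol : ∀ i i' j, P i j = P i' j := fun i i' j =>
    hA.apply_eq_of_mulVec_eq_smul hk (v := P.col j)
      (by rw [← mulVec_single_one, mulVec_mulVec, hAP, smul_mulVec]) i i'
  have hswap : ∀ i j, P i j = P j i := fun i j => hP.apply j i
  have hconst : ∀ i j i' j', P i j = P i' j' := fun i j i' j' => by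
    rw [hcol i i' j, hswap i' j, hcol j j' i', hswap j' i']
  ext i j
  have hrow := congrFun hP1 i
  simp only [mulVec, dotProduct, mul_one, Pi.one_apply] at hrow
  rw [Finset.sum_congr rfl fun l _ => hconst i l i j, Finset.sum_const, Finset.card_univ,
    nsmul_eq_mul] at hrow
  exact eq_inv_of_mul_eq_one_right hrow

theorem IsSymm.aeval_lagrangeBasis_eq {A : Matrix n n ℝ} (hA : A.IsSymm) (hIrr : A.IsIrreducible)
    {k : ℝ} (hk : A *ᵥ 1 = k • 1) {s : Finset ℝ} (hs : spectrum ℝ A ⊆ s) (hks : k ∈ s) :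
    Polynomial.aeval A (Lagrange.basis s id k) = of fun _ _ => (Fintype.card n : ℝ)⁻¹ := by
  have hvan : Polynomial.aeval A ((X - C k) * Lagrange.basis s id k) = 0 := by
    refine (isHermitian_iff_isSymm.2 hA).isSelfAdjoint.aeval_eq_zero_of_eval_eq_zero_on_spectrum
      fun x hx => ?_
    rcases eq_or_ne k x with rfl | hkx
    · simp
    · rw [eval_mul]
      exact mul_eq_zero_of_right _ (Lagrange.eval_basis_of_ne (v := id) hkx (hs hx))
  refine hIrr.eq_of_mul_eq_smul hk (hA.aeval _) ?_ ?_
  · rwa [map_mul, map_sub, aeval_X, aeval_C, Algebra.algebraMap_eq_smul_one, sub_mul,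
      smul_mul_assoc, one_mul, sub_eq_zero] at hvan
  · rw [aeval_mulVec_of_mulVec_eq_smul _ hk,
      show eval k _ = 1 from Lagrange.eval_basis_self (v := id) (Set.injOn_id _) hks, one_smul]

end Matrix

theorem consensus_in_diam_steps_of_good_matrix_general {N : ℕ} (G : SimpleGraph (Fin N))
    (D : ℕ)
    (M : Matrix (Fin N) (Fin N) ℝ) (hM : G.Complies M)
    (hsymm : M.IsSymm) (hnonneg : ∀ i j, 0 ≤ M i j)
    (hirr : ∀ i j : Fin N, ∃ m : ℕ, 1 ≤ m ∧ 0 < (M ^ m) i j)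
    (k : ℝ) (hk : M.mulVec (fun _ => (1 : ℝ)) = k • (fun _ => (1 : ℝ)))
    (heig : {μ : ℝ | ∃ v : Fin N → ℝ, v ≠ 0 ∧ M.mulVec v = μ • v}.ncard = D + 1) :
    ∃ A : Fin D → Matrix (Fin N) (Fin N) ℝ,
      (∀ t : Fin D, G.Complies (A t)) ∧
      (List.ofFn A).reverse.prod = Matrix.of (fun _ _ => (N : ℝ)⁻¹) := by
  have hfin := M.finite_spectrum
  set Λ := hfin.toFinset
  have hΛ : Λ.card = D + 1 := by
    rw [← Set.ncard_eq_toFinset_card _ hfin, spectrum_eq_setOf_exists_mulVec_eq_smul, heig]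
  have : Nonempty (Fin N) := by
    obtain ⟨μ, v, hv, -⟩ := Set.nonempty_of_ncard_ne_zero (by rw [heig]; omega)
    obtain ⟨i, -⟩ := Function.ne_iff.1 hv
    exact ⟨i⟩
  have hkΛ : k ∈ Λ := by
    rw [hfin.mem_toFinset, spectrum_eq_setOf_exists_mulVec_eq_smul]
    exact ⟨1, one_ne_zero, hk⟩
  let e : Λ.erase k ≃ Fin D :=
    Finset.equivFinOfCardEq (by rw [Finset.card_erase_of_mem hkΛ, hΛ, Nat.add_sub_cancel])
  refine ⟨fun t => aeval M (Lagrange.basisDivisor k (e.symm t)),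
    fun t => hM.aeval_of_natDegree_le_one (Lagrange.natDegree_basisDivisor_le _ _), ?_⟩
  rw [prod_reverse_ofFn_aeval, e.symm.prod_comp (fun a => Lagrange.basisDivisor k a),
    Finset.prod_coe_sort]
  have hℓ := hsymm.aeval_lagrangeBasis_eq ((isIrreducible_iff_exists_pow_pos hnonneg).2 hirr) hk
    hfin.coe_toFinset.superset hkΛ
  rwa [Fintype.card_fin] at hℓ

/-- If a connected graph `G` of diameter `D` admits a symmetric, entrywise
nonnegative, irreducible compliant matrix `M` with `M𝟙 = k𝟙` and exactly
`D + 1` distinct eigenvalues, then average consensus on `G` is achievable with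
`D` compliant matrices. -/
theorem consensus_in_diam_steps_of_good_matrix {N : ℕ} (G : SimpleGraph (Fin N))
    (hG : G.Connected) (D : ℕ) (hD : G.diam = D)
    (M : Matrix (Fin N) (Fin N) ℝ) (hM : G.Complies M)
    (hsymm : M.IsSymm) (hnonneg : ∀ i j, 0 ≤ M i j)
    (hirr : ∀ i j : Fin N, ∃ m : ℕ, 1 ≤ m ∧ 0 < (M ^ m) i j)
    (k : ℝ) (hk : M.mulVec (fun _ => (1 : ℝ)) = k • (fun _ => (1 : ℝ)))
    (heig : {μ : ℝ | ∃ v : Fin N → ℝ, v ≠ 0 ∧ M.mulVec v = μ • v}.ncard = D + 1) :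
    ∃ A : Fin D → Matrix (Fin N) (Fin N) ℝ,
      (∀ t : Fin D, G.Complies (A t)) ∧
      (List.ofFn A).reverse.prod = Matrix.of (fun _ _ => (N : ℝ)⁻¹) :=
  consensus_in_diam_steps_of_good_matrix_general G D M hM hsymm hnonneg hirr k hk heig
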